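/- arXiv:2503.18896 — 2 statements merged into one kernel-verified Lean document; each statement's English description precedes it below -/
import Mathlib

section
/- Let Y₁,…,Yₙ be independent with Y_i ∼ EDF(θ_i, v_i, φ, κ(·)), θ₁ ≤ ⋯ ≤ θₙ, and means μ_i = κ'(θ_i). Let 𝒥 ⊆ {1,…,n}² be a set of pairs (j,k) with j ≤ k, and suppose for each (j,k) ∈ 𝒥 we have random variables l_{j:k} and u_{j:k} satisfying P(μ_j > u_{j:k}) ≤ δ and P(μ_k < l_{j:k}) ≤ δ. Then with α = 2|𝒥|δ, defining L_i = sup{l_{j:k} : (j,k) ∈ 𝒥, θ_i ≥ θ_k} and U_i = inf{u_{j:k} : (j,k) ∈ 𝒥, θ_i ≤ θ_j}, we have P(L_i ≤ μ_i ≤ U_i for all i ∈ {1,…,n}) ≥ 1 − α. -/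
open MeasureTheory Set
open scoped ENNReal

/-- Union-bound construction of simultaneous calibration bands (Theorem 4.1):
from individual one-sided coverage bounds at level `δ` for each pair in `𝒥`, the
simultaneous band covers all true means with probability at least `1 − 2|𝒥|δ`.
Sup/inf over empty index sets are taken in `EReal` (the trivial bounds). -/
theorem calibration_band_union_bound
    {Ω : Type*} [MeasurableSpace Ω] (ℙ : Measure Ω) [IsProbabilityMeasure ℙ]
    {n : ℕ} (Θ : Set ℝ) (κ : ℝ → ℝ)
    (hκsmooth : ContDiffOn ℝ (⊤ : ℕ∞) κ (interior Θ))
    (hκconv : StrictConvexOn ℝ (interior Θ) κ)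
    (θ : Fin n → ℝ) (hθmem : ∀ i, θ i ∈ interior Θ) (hθmono : Monotone θ)
    (μ : Fin n → ℝ) (hμ : ∀ i, μ i = deriv κ (θ i))
    (J : Finset (Fin n × Fin n)) (hJ : ∀ p ∈ J, p.1 ≤ p.2)
    (δ : ℝ) (hδ : 0 < δ)
    (l u : Fin n × Fin n → Ω → ℝ)
    (hlm : ∀ p, Measurable (l p)) (hum : ∀ p, Measurable (u p))
    (hl : ∀ p ∈ J, ℙ {ω | μ p.2 < l p ω} ≤ ENNReal.ofReal δ)
    (hu : ∀ p ∈ J, ℙ {ω | u p ω < μ p.1} ≤ ENNReal.ofReal δ) :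
    1 - ENNReal.ofReal (2 * J.card * δ) ≤
      ℙ {ω | ∀ i : Fin n,
        sSup ((fun p => (l p ω : EReal)) '' {p | p ∈ J ∧ θ p.2 ≤ θ i}) ≤ (μ i : EReal)
        ∧ (μ i : EReal) ≤ sInf ((fun p => (u p ω : EReal)) '' {p | p ∈ J ∧ θ i ≤ θ p.1})} := by

  -- monotonicity of means
  have hdiff : ∀ x ∈ interior Θ, DifferentiableAt ℝ κ x := fun x hx =>
    (hκsmooth.differentiableOn (by simp)).differentiableAt (isOpen_interior.mem_nhds hx)
  have hmono : ∀ i k : Fin n, θ k ≤ θ i → μ k ≤ μ i := by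
    intro i k h
    rcases eq_or_lt_of_le h with h | h
    · rw [hμ i, hμ k, h]
    · rw [hμ i, hμ k]
      exact (hκconv.strictMonoOn_deriv hdiff (hθmem k) (hθmem i) h).le
  -- bad event
  set B : Set Ω := ⋃ p ∈ J, ({ω | μ p.2 < l p ω} ∪ {ω | u p ω < μ p.1}) with hB
  have hBmeas : MeasurableSet B := by
    refine MeasurableSet.biUnion J.countable_toSet fun p _ => MeasurableSet.union ?_ ?_
    · exact measurableSet_lt measurable_const (hlm p)
    · exact measurableSet_lt (hum p) measurable_const
  have hsub : Bᶜ ⊆ {ω | ∀ i : Fin n,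
        sSup ((fun p => (l p ω : EReal)) '' {p | p ∈ J ∧ θ p.2 ≤ θ i}) ≤ (μ i : EReal)
        ∧ (μ i : EReal) ≤ sInf ((fun p => (u p ω : EReal)) '' {p | p ∈ J ∧ θ i ≤ θ p.1})} := by
    intro ω hω i
    simp only [hB, compl_iUnion, mem_iInter, mem_compl_iff, mem_union, mem_setOf_eq,
      not_or, not_lt] at hω
    constructor
    · refine sSup_le ?_
      rintro x ⟨p, ⟨hpJ, hpθ⟩, rfl⟩
      have h1 : l p ω ≤ μ p.2 := (hω p hpJ).1
      have h2 : μ p.2 ≤ μ i := hmono i p.2 hpθ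
      simpa using EReal.coe_le_coe_iff.mpr (h1.trans h2)
    · refine le_sInf ?_
      rintro x ⟨p, ⟨hpJ, hpθ⟩, rfl⟩
      have h1 : μ p.1 ≤ u p ω := (hω p hpJ).2
      have h2 : μ i ≤ μ p.1 := hmono p.1 i hpθ
      simpa using EReal.coe_le_coe_iff.mpr (h2.trans h1)
  refine le_trans ?_ (measure_mono hsub)
  rw [prob_compl_eq_one_sub hBmeas]
  refine tsub_le_tsub_left ?_ 1
  have hmB : ℙ B ≤ ∑ p ∈ J, (ENNReal.ofReal δ + ENNReal.ofReal δ) := by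
    refine le_trans (measure_biUnion_finset_le J _) ?_
    refine Finset.sum_le_sum fun p hp => ?_
    exact le_trans (measure_union_le _ _) (add_le_add (hl p hp) (hu p hp))
  refine le_trans hmB ?_
  rw [Finset.sum_const, nsmul_eq_mul]
  rw [← ENNReal.ofReal_add hδ.le hδ.le]
  rw [show (2 : ℝ) * J.card * δ = J.card * (δ + δ) by ring]
  rw [ENNReal.ofReal_mul (by positivity), ENNReal.ofReal_natCast]
end

section
/- Let (Y, X) be integrable with μ*(X) = E[Y | X] a.s., and let μ̂ : 𝒳 → ℝ be a measurable regression function such that there exists a non-decreasing function G : ℝ → ℝ with μ*(X) = G(μ̂(X)) almost surely (i.e., μ̂ correctly ranks the true means). If μ̂ is auto-calibrated, i.e., μ̂(X) = E[Y | μ̂(X)] a.s., then μ̂(X) = μ*(X) almost surely. -/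
open MeasureTheory Set

/-- Under the correct-ranking assumption (the true conditional mean is a non-decreasing
transform of the estimated mean), auto-calibration implies calibration:
if `E[Y | X] = G(μ̂(X))` a.s. for a non-decreasing `G`, and `μ̂(X) = E[Y | μ̂(X)]` a.s.,
then `μ̂(X) = E[Y | X]` a.s. -/
theorem autocalibrated_implies_calibrated_of_correct_ranking
    {Ω 𝒳 : Type*} [MeasurableSpace Ω] [MeasurableSpace 𝒳]
    (ℙ : Measure Ω) [IsProbabilityMeasure ℙ]
    (Y : Ω → ℝ) (hYint : Integrable Y ℙ)
    (X : Ω → 𝒳) (hX : Measurable X)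
    (μhat : 𝒳 → ℝ) (hμhat : Measurable μhat)
    (G : ℝ → ℝ) (hG : Monotone G)
    (hrank : (fun ω => G (μhat (X ω)))
      =ᵐ[ℙ] ℙ[Y | MeasurableSpace.comap X inferInstance])
    (hauto : (fun ω => μhat (X ω))
      =ᵐ[ℙ] ℙ[Y | MeasurableSpace.comap (fun ω => μhat (X ω)) inferInstance]) :
    (fun ω => μhat (X ω)) =ᵐ[ℙ] ℙ[Y | MeasurableSpace.comap X inferInstance] := by
  have hmeas : Measurable (fun ω => μhat (X ω)) := hμhat.comp hX
  have hm_le : MeasurableSpace.comap (fun ω => μhat (X ω)) inferInstance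
      ≤ ‹MeasurableSpace Ω› := hmeas.comap_le
  have hmX : MeasurableSpace.comap (fun ω => μhat (X ω)) inferInstance
      ≤ MeasurableSpace.comap X inferInstance := by
    rintro s ⟨t, ht, rfl⟩
    exact ⟨μhat ⁻¹' t, hμhat ht, rfl⟩
  have hX_le : MeasurableSpace.comap X inferInstance ≤ ‹MeasurableSpace Ω› := hX.comap_le
  have htower : ℙ[ℙ[Y | MeasurableSpace.comap X inferInstance]
        | MeasurableSpace.comap (fun ω => μhat (X ω)) inferInstance]
      =ᵐ[ℙ] ℙ[Y | MeasurableSpace.comap (fun ω => μhat (X ω)) inferInstance] :=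
    condExp_condExp_of_le hmX hX_le
  have hint : Integrable (fun ω => G (μhat (X ω))) ℙ :=
    integrable_condExp.congr hrank.symm
  have hmm : Measurable[MeasurableSpace.comap (fun ω => μhat (X ω)) inferInstance]
      (fun ω => μhat (X ω)) := Measurable.of_comap_le le_rfl
  have hsm : StronglyMeasurable[MeasurableSpace.comap (fun ω => μhat (X ω)) inferInstance]
      (fun ω => G (μhat (X ω))) := (hG.measurable.comp hmm).stronglyMeasurable
  have hfix : ℙ[(fun ω => G (μhat (X ω)))
        | MeasurableSpace.comap (fun ω => μhat (X ω)) inferInstance]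
      = fun ω => G (μhat (X ω)) :=
    condExp_of_stronglyMeasurable hm_le hsm hint
  have hGm : (fun ω => G (μhat (X ω)))
      =ᵐ[ℙ] ℙ[Y | MeasurableSpace.comap (fun ω => μhat (X ω)) inferInstance] :=
    hfix ▸ (condExp_congr_ae hrank).trans htower
  exact hauto.trans (hGm.symm.trans hrank)
end
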